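/- arXiv:0711.4696 — 2 statements merged into one kernel-verified Lean document; each statement's English description precedes it below -/
import Mathlib

section
/- Let (a_n) be real with -1 < a_n < 1, set h_0 = 1 and h_n = ∏_{s=0}^{n-1}(1 - a_s²). With a_{2n} = cn(w(2n+1); k) and a_{2n+1} = -dn(w(2n+2); k) (Jacobi elliptic functions with modulus 0 < k < 1 and real w), one has h_n = μ_n ∏_{s=1}^n sn²(ws; k), where μ_n = k^n for even n and μ_n = k^{n-1} for odd n; in particular h_n > 0. -/
/-! Each factor of `h_n` is a Pythagorean identity in disguise: for even `s`,
`1 - cn²(w(s+1)) = sn²(w(s+1))`, and for odd `s`, `1 - dn²(w(s+1)) = k² sn²(w(s+1))`.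
Hence `h_n` is `∏_{s=1}^n sn²(ws)` times one factor `k²` per odd index below `n`, which is
`μ_n`; positivity follows since no `sn(ws)` vanishes. -/

open Finset

theorem prod_range_ite_even_one_sq {M : Type*} [CommMonoid M] (c : M) (n : ℕ) :
    ∏ s ∈ range n, (if Even s then 1 else c ^ 2) = if Even n then c ^ n else c ^ (n - 1) := by
  induction n with
  | zero => simp
  | succ n ih =>
    rw [prod_range_succ, ih]
    rcases Nat.even_or_odd n with hn | ⟨m, rfl⟩
    · simp [hn, Nat.even_add_one]
    · simp [Nat.even_add_one, ← pow_add]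

theorem prod_range_comp_succ_eq_prod_Icc {M : Type*} [CommMonoid M] (f : ℕ → M) (n : ℕ) :
    ∏ s ∈ range n, f (s + 1) = ∏ s ∈ Icc 1 n, f s := by
  rw [range_eq_Ico, prod_Ico_add', Ico_add_one_right_eq_Icc, zero_add]

theorem elliptic_cn_normalization_general (k w : ℝ) (hk : 0 < k)
    (sn cn dn : ℝ → ℝ)
    (hcn : ∀ u, 1 - (cn u) ^ 2 = (sn u) ^ 2)
    (hdn : ∀ u, 1 - (dn u) ^ 2 = k ^ 2 * (sn u) ^ 2)
    (hsn : ∀ s : ℕ, 1 ≤ s → sn (w * s) ≠ 0)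
    (a : ℕ → ℝ)
    (ha : ∀ m : ℕ, a m = if Even m then cn (w * (m + 1)) else -dn (w * (m + 1)))
    (h : ℕ → ℝ) (hh : ∀ n, h n = ∏ s ∈ Finset.range n, (1 - (a s) ^ 2)) :
    ∀ n : ℕ, h n = (if Even n then k ^ n else k ^ (n - 1)) *
        ∏ s ∈ Finset.Icc 1 n, (sn (w * s)) ^ 2 ∧ 0 < h n := by
  intro n
  have factor (s : ℕ) :
      1 - a s ^ 2 = (if Even s then 1 else k ^ 2) * sn (w * ↑(s + 1)) ^ 2 := by
    rw [ha, Nat.cast_succ]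
    split_ifs
    · rw [hcn, one_mul]
    · rw [neg_sq, hdn]
  have formula : h n = (if Even n then k ^ n else k ^ (n - 1)) *
      ∏ s ∈ Icc 1 n, sn (w * s) ^ 2 := by
    rw [hh, prod_congr rfl fun s _ ↦ factor s, prod_mul_distrib, prod_range_ite_even_one_sq,
      prod_range_comp_succ_eq_prod_Icc fun s ↦ sn (w * s) ^ 2]
  refine ⟨formula, formula ▸ mul_pos (by split_ifs <;> positivity) (prod_pos fun s hs ↦ ?_)⟩
  have := hsn s (mem_Icc.mp hs).1
  positivity

/-- Normalization constants of the elliptic cn-polynomials.  Here `sn, cn, dn` are the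
Jacobi elliptic functions with modulus `k` (characterized here by the Pythagorean
identities `1 - cn² = sn²` and `1 - dn² = k²·sn²`).  With reflection parameters
`a_{2n} = cn(w(2n+1))`, `a_{2n+1} = -dn(w(2n+2))` and `h_n = ∏_{s<n}(1-a_s²)`, one has
`h_n = μ_n ∏_{s=1}^n sn²(ws)` with `μ_n = kⁿ` for even `n`, `μ_n = k^{n-1}` for odd `n`;
in particular `h_n > 0`. -/
theorem elliptic_cn_normalization (k w : ℝ) (hk : 0 < k) (hk1 : k < 1)
    (sn cn dn : ℝ → ℝ)
    (hcn : ∀ u, 1 - (cn u) ^ 2 = (sn u) ^ 2)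
    (hdn : ∀ u, 1 - (dn u) ^ 2 = k ^ 2 * (sn u) ^ 2)
    (hsn : ∀ s : ℕ, 1 ≤ s → sn (w * s) ≠ 0)
    (a : ℕ → ℝ)
    (ha : ∀ m : ℕ, a m = if Even m then cn (w * (m + 1)) else -dn (w * (m + 1)))
    (h : ℕ → ℝ) (hh : ∀ n, h n = ∏ s ∈ Finset.range n, (1 - (a s) ^ 2)) :
    ∀ n : ℕ, h n = (if Even n then k ^ n else k ^ (n - 1)) *
        ∏ s ∈ Finset.Icc 1 n, (sn (w * s)) ^ 2 ∧ 0 < h n :=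
  elliptic_cn_normalization_general k w hk sn cn dn hcn hdn hsn a ha h hh
end

section
/- Let Φ_n be monic real polynomials of degree n with Φ_0 = 1 defined by the Szegő recurrence Φ_{n+1}(z) = zΦ_n(z) - a_n Φ_n*(z) with real -1 < a_n < 1, and define S_n(x) = [z^{-n/2}Φ_n(z) + z^{n/2}Φ_n(1/z)] / [2^n (1 - a_{n-1})] under the substitution x = (z^{1/2} + z^{-1/2})/2 (with a_{-1} = -1). Then S_n is a monic polynomial of degree n in x satisfying S_{n+1}(x) + v_n S_{n-1}(x) = x S_n(x) with v_n = (1/4)(1 + a_{n-1})(1 - a_{n-2}). -/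
/-!
Write `z = u²` with `u v = 1` and `x = (u + v) / 2`, and let `F_m`, `G_m` be the symmetrized
values `szegoSym`, `szegoSymShift` below. Because `zᵐ Φ_m(1/z)` is the reversed polynomial
`Φ_m*`, the Szegő recurrence becomes the pair `F_{m+1} = (1 - a_m) G_m` and
`G_{m+1} = 2x G_m - (1 + a_m) F_m`. Eliminating `F` shows that `G_m / 2^{m+1}` obeys the
three-term recurrence of `S_{m+1}`, and then `F_m / (2^m (1 - a_{m-1})) = S_m`, the case `m = 0`
being the convention `a_{-1} = -1`.
-/

open Polynomial Complex

section Szego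

variable {R A : Type*} [CommRing R] [CommRing A] [Algebra R A]

theorem aeval_reflect_of_mul_eq_one {N : ℕ} {p : R[X]} (hp : p.natDegree ≤ N) {u v : A}
    (huv : u * v = 1) : aeval u (reflect N p) = u ^ N * aeval v p := by
  let : Invertible v := invertibleOfLeftInverse v u huv
  have h := eval₂_reflect_mul_pow (algebraMap R A) v N p hp
  rw [invOf_eq_left_inv huv] at h
  rw [aeval_def, aeval_def, ← h, mul_left_comm, ← mul_pow, huv, one_pow, mul_one]

variable {a : ℤ → R} {Φ : ℕ → R[X]}

theorem natDegree_szego_le (h0 : Φ 0 = 1)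
    (hrec : ∀ n : ℕ, Φ (n + 1) = X * Φ n - C (a n) * reflect n (Φ n)) (n : ℕ) :
    (Φ n).natDegree ≤ n := by
  induction n with
  | zero => simp [h0]
  | succ n ih =>
    rw [hrec n]
    refine (natDegree_sub_le _ _).trans (max_le ?_ ?_)
    · have := (natDegree_mul_le (p := X) (q := Φ n)).trans
        (add_le_add (natDegree_X_le (R := R)) ih)
      omega
    · exact (natDegree_C_mul_le _ _).trans (natDegree_reflect_le.trans (by omega))

/-- With `z = u²` and `u v = 1`, this is `z^{-m/2} Φ_m(z) + z^{m/2} Φ_m(1/z)`. -/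
noncomputable def szegoSym (Φ : ℕ → R[X]) (u v : A) (m : ℕ) : A :=
  v ^ m * aeval (u ^ 2) (Φ m) + u ^ m * aeval (v ^ 2) (Φ m)

/-- With `z = u²` and `u v = 1`, this is `z^{(1-m)/2} Φ_m(z) + z^{(m-1)/2} Φ_m(1/z)`. -/
noncomputable def szegoSymShift (Φ : ℕ → R[X]) (u v : A) (m : ℕ) : A :=
  u * v ^ m * aeval (u ^ 2) (Φ m) + v * u ^ m * aeval (v ^ 2) (Φ m)

theorem aeval_sq_szego_succ (h0 : Φ 0 = 1)
    (hrec : ∀ n : ℕ, Φ (n + 1) = X * Φ n - C (a n) * reflect n (Φ n))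
    {u v : A} (huv : u * v = 1) (m : ℕ) :
    aeval (u ^ 2) (Φ (m + 1)) =
      u ^ 2 * aeval (u ^ 2) (Φ m) - algebraMap R A (a m) * (u ^ 2) ^ m * aeval (v ^ 2) (Φ m) := by
  have huv2 : u ^ 2 * v ^ 2 = 1 := by rw [← mul_pow, huv, one_pow]
  rw [hrec m, map_sub, map_mul, map_mul, aeval_X, aeval_C,
    aeval_reflect_of_mul_eq_one (natDegree_szego_le h0 hrec m) huv2, mul_assoc]

theorem szegoSym_succ (h0 : Φ 0 = 1)
    (hrec : ∀ n : ℕ, Φ (n + 1) = X * Φ n - C (a n) * reflect n (Φ n))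
    {u v : A} (huv : u * v = 1) (m : ℕ) :
    szegoSym Φ u v (m + 1) = (1 - algebraMap R A (a m)) * szegoSymShift Φ u v m := by
  have hum : u ^ m * v ^ m = 1 := by rw [← mul_pow, huv, one_pow]
  rw [szegoSym, szegoSymShift, aeval_sq_szego_succ h0 hrec huv,
    aeval_sq_szego_succ h0 hrec ((mul_comm v u).trans huv)]
  set P := aeval (u ^ 2) (Φ m)
  set Q := aeval (v ^ 2) (Φ m)
  linear_combination (u * v ^ m * P + v * u ^ m * Q) * huv -
    algebraMap R A (a m) * (u * v ^ m * P + v * u ^ m * Q) * hum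

theorem szegoSymShift_succ (h0 : Φ 0 = 1)
    (hrec : ∀ n : ℕ, Φ (n + 1) = X * Φ n - C (a n) * reflect n (Φ n))
    {u v : A} (huv : u * v = 1) (m : ℕ) :
    szegoSymShift Φ u v (m + 1) =
      (u + v) * szegoSymShift Φ u v m - (1 + algebraMap R A (a m)) * szegoSym Φ u v m := by
  have hum : u ^ m * v ^ m = 1 := by rw [← mul_pow, huv, one_pow]
  rw [szegoSym, szegoSymShift, szegoSymShift, aeval_sq_szego_succ h0 hrec huv,
    aeval_sq_szego_succ h0 hrec ((mul_comm v u).trans huv)]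
  set P := aeval (u ^ 2) (Φ m)
  set Q := aeval (v ^ 2) (Φ m)
  set α := algebraMap R A (a m)
  linear_combination
    (v ^ m * P * (u ^ 2 - 1) + u ^ m * Q * (v ^ 2 - 1) - α * (u ^ m * Q + v ^ m * P)) * huv -
      α * (u ^ m * Q + v ^ m * P) * u * v * hum

end Szego

section ThreeTerm

variable {R : Type*} [CommRing R]

noncomputable def threeTermPoly (v : ℕ → R) : ℕ → R[X]
  | 0 => 1
  | 1 => X
  | n + 2 => X * threeTermPoly v (n + 1) - C (v (n + 1)) * threeTermPoly v n

theorem threeTermPoly_monic_natDegree [Nontrivial R] (v : ℕ → R) :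
    ∀ n, (threeTermPoly v n).Monic ∧ (threeTermPoly v n).natDegree = n
  | 0 => ⟨monic_one, natDegree_one⟩
  | 1 => ⟨monic_X, natDegree_X⟩
  | n + 2 => by
    obtain ⟨hmon, hdeg⟩ := threeTermPoly_monic_natDegree v (n + 1)
    have hdeg' := (threeTermPoly_monic_natDegree v n).2
    have hXmon : (X * threeTermPoly v (n + 1)).Monic := monic_X.mul hmon
    have hXdeg : (X * threeTermPoly v (n + 1)).natDegree = n + 2 := by
      rw [monic_X.natDegree_mul hmon, natDegree_X, hdeg]; omega
    have hlt : (C (v (n + 1)) * threeTermPoly v n).natDegree <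
        (X * threeTermPoly v (n + 1)).natDegree := by
      have := natDegree_C_mul_le (v (n + 1)) (threeTermPoly v n)
      omega
    rw [threeTermPoly]
    exact ⟨hXmon.sub_of_left (degree_lt_degree hlt),
      by rw [natDegree_sub_eq_left_of_natDegree_lt hlt, hXdeg]⟩

end ThreeTerm

section DelsarteGenin

variable {K A : Type*} [Field K] [CharZero K] [CommRing A] [Algebra K A]

noncomputable def delsarteGeninCoeff (a : ℤ → K) (n : ℕ) : K :=
  (1 / 4) * (1 + a ((n : ℤ) - 1)) * (1 - a ((n : ℤ) - 2))

noncomputable def delsarteGenin (a : ℤ → K) : ℕ → K[X] :=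
  threeTermPoly (delsarteGeninCoeff a)

theorem two_pow_mul_aeval_delsarteGenin {a : ℤ → K} (ham1 : a (-1) = -1) {Φ : ℕ → K[X]}
    (h0 : Φ 0 = 1) (hrec : ∀ n : ℕ, Φ (n + 1) = X * Φ n - C (a n) * reflect n (Φ n))
    {u v x : A} (huv : u * v = 1) (hx : 2 * x = u + v) (n : ℕ) :
    2 ^ n * (1 - algebraMap K A (a (n - 1))) * aeval x (delsarteGenin a n) = szegoSym Φ u v n := by
  suffices h : ∀ n : ℕ,
      2 ^ n * (1 - algebraMap K A (a (n - 1))) * aeval x (delsarteGenin a n) = szegoSym Φ u v n ∧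
      2 ^ (n + 1) * aeval x (delsarteGenin a (n + 1)) = szegoSymShift Φ u v n from (h n).1
  intro n
  induction n with
  | zero =>
    simp [delsarteGenin, threeTermPoly, szegoSym, szegoSymShift, h0, ham1, hx]
  | succ n ih =>
    obtain ⟨hsym, hshift⟩ := ih
    have hquarter : algebraMap K A (1 / 4) * 4 = 1 := by
      rw [← map_ofNat (algebraMap K A) 4, ← map_mul]; norm_num
    refine ⟨?_, ?_⟩
    · rw [szegoSym_succ h0 hrec huv, ← hshift, Nat.cast_succ, add_sub_cancel_right]
      ring
    · rw [szegoSymShift_succ h0 hrec huv, ← hshift, ← hsym]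
      simp only [delsarteGenin, threeTermPoly, delsarteGeninCoeff, map_sub, map_mul, map_add,
        map_one, aeval_X, aeval_C, Nat.cast_succ, add_sub_cancel_right]
      rw [show (n : ℤ) + 1 - 2 = n - 1 by ring]
      linear_combination 2 ^ (n + 1) * aeval x (threeTermPoly (delsarteGeninCoeff a) (n + 1)) * hx
        - (1 + algebraMap K A (a n)) * (1 - algebraMap K A (a (n - 1))) *
          aeval x (threeTermPoly (delsarteGeninCoeff a) n) * 2 ^ n * hquarter

end DelsarteGenin

theorem exp_mul_exp_neg_half (θ : ℝ) : exp (I * θ / 2) * exp (-I * θ / 2) = 1 := by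
  rw [← exp_add]; ring_nf; exact exp_zero

theorem two_mul_cos_half (θ : ℝ) :
    2 * ((Real.cos (θ / 2) : ℝ) : ℂ) = exp (I * θ / 2) + exp (-I * θ / 2) := by
  rw [ofReal_cos, two_cos]; push_cast; ring_nf

theorem szegoSym_exp (Φ : ℕ → ℝ[X]) (θ : ℝ) (n : ℕ) :
    szegoSym Φ (exp (I * θ / 2)) (exp (-I * θ / 2)) n =
      exp (-I * n * θ / 2) * aeval (exp (I * θ)) (Φ n) +
        exp (I * n * θ / 2) * aeval (exp (-I * θ)) (Φ n) := by
  simp only [szegoSym, ← exp_nat_mul]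
  ring_nf

/-- Delsarte–Genin transformation: from Szegő polynomials `Φ_n` with real reflection
parameters `-1 < a_n < 1` (and `a_{-1} = -1`), the functions
`S_n(x) = [z^{-n/2}Φ_n(z) + z^{n/2}Φ_n(1/z)] / [2ⁿ(1-a_{n-1})]`, `x = (z^{1/2}+z^{-1/2})/2`
(realized via `z = e^{iθ}`, `x = cos(θ/2)`), are monic polynomials of degree `n`
satisfying `S_{n+1}(x) + v_n S_{n-1}(x) = x S_n(x)` with
`v_n = (1/4)(1+a_{n-1})(1-a_{n-2})`. -/
theorem delsarte_genin (a : ℤ → ℝ) (ham1 : a (-1) = -1)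
    (ha : ∀ n : ℤ, 0 ≤ n → -1 < a n ∧ a n < 1)
    (Φ : ℕ → Polynomial ℝ) (h0 : Φ 0 = 1)
    (hrec : ∀ n : ℕ, Φ (n + 1) = X * Φ n - C (a n) * Polynomial.reflect n (Φ n)) :
    ∃ S : ℕ → Polynomial ℝ,
      (∀ n, (S n).Monic ∧ (S n).natDegree = n) ∧
      (∀ n : ℕ, ∀ θ : ℝ,
        ((((S n).eval (Real.cos (θ / 2)) : ℝ) : ℂ)) =
          (Complex.exp (-Complex.I * n * θ / 2) *
              Polynomial.aeval (Complex.exp (Complex.I * θ)) (Φ n) +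
            Complex.exp (Complex.I * n * θ / 2) *
              Polynomial.aeval (Complex.exp (-Complex.I * θ)) (Φ n)) /
          ((2 : ℂ) ^ n * (1 - (a ((n : ℤ) - 1) : ℂ)))) ∧
      S 1 = X * S 0 ∧
      (∀ n : ℕ, 1 ≤ n →
        S (n + 1) + C ((1 / 4) * (1 + a ((n : ℤ) - 1)) * (1 - a ((n : ℤ) - 2))) * S (n - 1) =
          X * S n) := by
  refine ⟨delsarteGenin a, threeTermPoly_monic_natDegree _, fun n θ => ?_,
    by simp [delsarteGenin, threeTermPoly], fun n hn => ?_⟩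
  · have ha_lt : a (n - 1) < 1 := by
      rcases n with _ | n
      · simp [ham1]
      · simpa using (ha n n.cast_nonneg).2
    have hne : (2 : ℂ) ^ n * (1 - (a (n - 1) : ℂ)) ≠ 0 :=
      mul_ne_zero (pow_ne_zero _ two_ne_zero) (by exact_mod_cast (sub_pos.2 ha_lt).ne')
    have hreal : aeval ((Real.cos (θ / 2) : ℝ) : ℂ) (delsarteGenin a n) =
        ((eval (Real.cos (θ / 2)) (delsarteGenin a n) : ℝ) : ℂ) :=
      aeval_algebraMap_apply_eq_algebraMap_eval _ _
    rw [← szegoSym_exp, eq_div_iff hne, ← two_pow_mul_aeval_delsarteGenin ham1 h0 hrec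
      (exp_mul_exp_neg_half θ) (two_mul_cos_half θ), Complex.coe_algebraMap, hreal]
    ring
  · obtain ⟨m, rfl⟩ := Nat.exists_eq_add_of_le' hn
    simp only [delsarteGenin, threeTermPoly, delsarteGeninCoeff, Nat.add_sub_cancel]
    ring
end
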